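/- arXiv:1609.06343 — 3 statements merged into one kernel-verified Lean document; each statement's English description precedes it below -/
import Mathlib

section
/- Let n ≥ 1, let U, V ⊆ ℂ be open sets, let g, h : U → ℂ and f : V → ℂ be holomorphic with h(U) ⊆ V. Define a matrix-valued function M : U → Matrix (Fin n) (Fin n) ℂ (entries indexed 0,…,n−1) by the recursion: M_{0,0} = g; M_{i,j} = 0 whenever i > j; and for j ≥ 1 and 0 ≤ i ≤ j, M_{i,j} = (M_{i,j−1})′ + M_{i−1,j−1}·h′ (with the convention M_{−1,j−1} = 0). Then for every 0 ≤ j ≤ n−1 and every z ∈ U, the j-th derivative of z ↦ g(z)·f(h(z)) at z equals Σ_{k=0}^{n−1} f^{(k)}(h(z))·M_{k,j}(z). -/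
/-!
Differentiating `∑ₖ f⁽ᵏ⁾(h z) · M_{k,j}(z)` once more produces, by the product and chain rules,
`∑ₖ f⁽ᵏ⁺¹⁾(h z) · h'(z) · M_{k,j}(z) + f⁽ᵏ⁾(h z) · M_{k,j}'(z)`; shifting the index in the first
sum turns this into `∑ₖ f⁽ᵏ⁾(h z) · M_{k,j+1}(z)`, which is exactly the recursion defining `M`.
Since `M` is only constrained on `U`, we run the induction for a canonical ℕ-indexed family of
holomorphic coefficients and then show that `M` agrees with it on `U`.
-/

open Topology

noncomputable def mulCompCoeff (g h : ℂ → ℂ) : ℕ → ℕ → ℂ → ℂ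
  | i, 0 => if i = 0 then g else 0
  | i, j + 1 => fun z =>
      deriv (mulCompCoeff g h i j) z
        + (if i = 0 then 0 else mulCompCoeff g h (i - 1) j z) * deriv h z

section mulCompCoeff

variable {U V : Set ℂ} {g h f : ℂ → ℂ}

theorem mulCompCoeff_eq_zero_of_lt (g h : ℂ → ℂ) {i j : ℕ} (hji : j < i) :
    mulCompCoeff g h i j = 0 := by
  induction j generalizing i with
  | zero => simp [mulCompCoeff, Nat.ne_zero_of_lt hji]
  | succ j ih =>
    funext z
    simp [mulCompCoeff, ih (Nat.lt_of_succ_lt hji), ih (Nat.lt_sub_of_add_lt hji)]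

theorem analyticOnNhd_mulCompCoeff (hg : AnalyticOnNhd ℂ g U) (hh : AnalyticOnNhd ℂ h U)
    (i j : ℕ) : AnalyticOnNhd ℂ (mulCompCoeff g h i j) U := by
  induction j generalizing i with
  | zero =>
    by_cases hi : i = 0
    · simpa [mulCompCoeff, hi] using hg
    · simp only [mulCompCoeff, hi, if_false]
      exact analyticOnNhd_const
  | succ j ih =>
    refine (ih i).deriv.add (AnalyticOnNhd.mul ?_ hh.deriv)
    split_ifs
    · exact analyticOnNhd_const
    · exact ih (i - 1)

theorem sum_mul_mulCompCoeff_succ (F : ℕ → ℂ) {j N : ℕ} (hjN : j + 1 < N) (z : ℂ) :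
    ∑ k ∈ Finset.range N, F k * mulCompCoeff g h k (j + 1) z
      = ∑ k ∈ Finset.range N, (F (k + 1) * deriv h z * mulCompCoeff g h k j z
          + F k * deriv (mulCompCoeff g h k j) z) := by
  obtain ⟨N, rfl⟩ : ∃ N', N = N' + 1 := ⟨N - 1, by omega⟩
  have hshift : ∑ k ∈ Finset.range (N + 1),
      F k * ((if k = 0 then 0 else mulCompCoeff g h (k - 1) j z) * deriv h z)
        = ∑ k ∈ Finset.range (N + 1), F (k + 1) * deriv h z * mulCompCoeff g h k j z := by
    rw [Finset.sum_range_succ', Finset.sum_range_succ _ N,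
      mulCompCoeff_eq_zero_of_lt g h (i := N) (by omega)]
    simp only [Nat.add_one_ne_zero, if_false, if_true, Nat.add_sub_cancel, Pi.zero_apply,
      mul_zero, zero_mul, add_zero]
    exact Finset.sum_congr rfl fun k _ => by ring
  simp only [mulCompCoeff, mul_add, Finset.sum_add_distrib, hshift, add_comm]

theorem iteratedDeriv_mul_comp_eq_sum (hU : IsOpen U) (hV : IsOpen V)
    (hg : DifferentiableOn ℂ g U) (hh : DifferentiableOn ℂ h U) (hf : DifferentiableOn ℂ f V)
    (hUV : Set.MapsTo h U V) {j N : ℕ} (hjN : j < N) {z : ℂ} (hz : z ∈ U) :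
    iteratedDeriv j (fun w => g w * f (h w)) z
      = ∑ k ∈ Finset.range N, iteratedDeriv k f (h z) * mulCompCoeff g h k j z := by
  have hcoeff := analyticOnNhd_mulCompCoeff (hg.analyticOnNhd hU) (hh.analyticOnNhd hU)
  have hfk (k : ℕ) : AnalyticOnNhd ℂ (iteratedDeriv k f) V := by
    rw [iteratedDeriv_eq_iterate]
    exact (hf.analyticOnNhd hV).iterated_deriv k
  induction j generalizing z with
  | zero => simp [mulCompCoeff, ite_apply, mul_ite, hjN, mul_comm]
  | succ j ih =>
    have hterm (k : ℕ) : HasDerivAt (fun w => iteratedDeriv k f (h w) * mulCompCoeff g h k j w)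
        (iteratedDeriv (k + 1) f (h z) * deriv h z * mulCompCoeff g h k j z
          + iteratedDeriv k f (h z) * deriv (mulCompCoeff g h k j) z) z := by
      have hfk' : HasDerivAt (iteratedDeriv k f) (iteratedDeriv (k + 1) f (h z)) (h z) := by
        rw [iteratedDeriv_succ]
        exact (hfk k (h z) (hUV hz)).differentiableAt.hasDerivAt
      exact (hfk'.comp z (hh.differentiableAt (hU.mem_nhds hz)).hasDerivAt).mul
        (hcoeff k j z hz).differentiableAt.hasDerivAt
    have hev : iteratedDeriv j (fun w => g w * f (h w)) =ᶠ[𝓝 z]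
        fun w => ∑ k ∈ Finset.range N, iteratedDeriv k f (h w) * mulCompCoeff g h k j w := by
      filter_upwards [hU.mem_nhds hz] with w hw using ih (by omega) hw
    rw [iteratedDeriv_succ, hev.deriv_eq, (HasDerivAt.fun_sum fun k _ => hterm k).deriv,
      sum_mul_mulCompCoeff_succ _ hjN]

theorem eq_mulCompCoeff_of_recursion {n : ℕ} [NeZero n] (hU : IsOpen U)
    (M : ℂ → Matrix (Fin n) (Fin n) ℂ)
    (hM00 : ∀ z ∈ U, M z 0 0 = g z)
    (hMlow : ∀ i j : Fin n, (j : ℕ) < (i : ℕ) → ∀ z ∈ U, M z i j = 0)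
    (hMrec : ∀ i j : Fin n, 1 ≤ (j : ℕ) → (i : ℕ) ≤ (j : ℕ) → ∀ z ∈ U,
      M z i j = deriv (fun w => M w i (j - 1)) z
        + (if (i : ℕ) = 0 then 0 else M z (i - 1) (j - 1)) * deriv h z)
    (i j : Fin n) {z : ℂ} (hz : z ∈ U) : M z i j = mulCompCoeff g h i j z := by
  obtain ⟨j, hj⟩ := j
  induction j generalizing i z with
  | zero =>
    rcases Nat.eq_zero_or_pos i with hi | hi
    · obtain rfl : i = 0 := Fin.ext hi
      simp [mulCompCoeff, hM00 z hz]
    · rw [hMlow i ⟨0, hj⟩ hi z hz, mulCompCoeff_eq_zero_of_lt g h hi, Pi.zero_apply]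
  | succ j ih =>
    rcases lt_or_ge (j + 1) i with hi | hi
    · rw [hMlow i ⟨j + 1, hj⟩ hi z hz, mulCompCoeff_eq_zero_of_lt g h hi, Pi.zero_apply]
    have hpred : (⟨j + 1, hj⟩ - 1 : Fin n) = ⟨j, by omega⟩ := by
      ext
      rw [Fin.val_sub_one_of_ne_zero (Fin.ne_of_val_ne (Nat.add_one_ne_zero j))]
      rfl
    have hderiv : deriv (fun w => M w i ⟨j, by omega⟩) z = deriv (mulCompCoeff g h i j) z :=
      Filter.EventuallyEq.deriv_eq <| by
        filter_upwards [hU.mem_nhds hz] with w hw using ih i hw (by omega)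
    rw [hMrec i _ (Nat.le_add_left 1 j) hi z hz, hpred, hderiv]
    simp only [mulCompCoeff]
    split_ifs with hi0
    · rfl
    · rw [ih (i - 1) hz (by omega), Fin.val_sub_one_of_ne_zero (Fin.ne_of_val_ne hi0)]

end mulCompCoeff

/-- the matrix `M = M₂(h′)M₁(g)` defined by the recursion
`M_{0,0} = g`, `M_{i,j} = 0` for `i > j`, and
`M_{i,j} = (M_{i,j−1})′ + M_{i−1,j−1}·h′` expresses the `j`-th derivative of
`z ↦ g z * f (h z)` as `∑ k, f^{(k)}(h z) * M_{k,j}(z)`. -/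
theorem wronskian_composition_matrix (n : ℕ) [NeZero n] (U V : Set ℂ)
    (hU : IsOpen U) (hV : IsOpen V) (g h f : ℂ → ℂ)
    (hg : DifferentiableOn ℂ g U) (hh : DifferentiableOn ℂ h U)
    (hf : DifferentiableOn ℂ f V) (hUV : Set.MapsTo h U V)
    (M : ℂ → Matrix (Fin n) (Fin n) ℂ)
    (hM00 : ∀ z ∈ U, M z 0 0 = g z)
    (hMlow : ∀ i j : Fin n, (j : ℕ) < (i : ℕ) → ∀ z ∈ U, M z i j = 0)
    (hMrec : ∀ i j : Fin n, 1 ≤ (j : ℕ) → (i : ℕ) ≤ (j : ℕ) → ∀ z ∈ U,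
      M z i j = deriv (fun w => M w i (j - 1)) z
        + (if (i : ℕ) = 0 then 0 else M z (i - 1) (j - 1)) * deriv h z) :
    ∀ j : Fin n, ∀ z ∈ U,
      iteratedDeriv (j : ℕ) (fun w => g w * f (h w)) z
        = ∑ k : Fin n, iteratedDeriv (k : ℕ) f (h z) * M z k j := by
  intro j z hz
  simp only [eq_mulCompCoeff_of_recursion hU M hM00 hMlow hMrec _ j hz]
  rw [iteratedDeriv_mul_comp_eq_sum hU hV hg hh hf hUV j.isLt hz,
    Fin.sum_univ_eq_sum_range (fun k => iteratedDeriv k f (h z) * mulCompCoeff g h k j z)]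
end

section
/- Let n ≥ 1, let U ⊆ ℂ be open, let g, h : U → ℂ be holomorphic, and let M : U → Matrix (Fin n) (Fin n) ℂ be defined by the recursion: M_{0,0} = g; M_{i,j} = 0 for i > j; and for j ≥ 1 and 0 ≤ i ≤ j, M_{i,j} = (M_{i,j−1})′ + M_{i−1,j−1}·h′ (with M_{−1,j−1} = 0). Then (a) the diagonal entries satisfy M_{j,j}(z) = g(z)·(h′(z))^j for all j and z ∈ U; and (b) for every z ∈ U, writing D(ε) = diag(1, ε, ε², …, ε^{n−1}), one has lim_{ε→0} D(ε)·M(z)ᵀ·D(ε)^{−1} = diag(g(z), g(z)h′(z), …, g(z)(h′(z))^{n−1}). -/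
/-!
Along the diagonal the recursion reads `M_{j,j} = (M_{j,j-1})′ + M_{j-1,j-1} h′`, and `M_{j,j-1}`
vanishes identically on the open set `U`, so its derivative drops out and `M_{j,j} = g (h′)^j`.
For (b), conjugating the lower triangular matrix `Mᵀ` by `D(ε)` multiplies its `(i, j)` entry by
`ε^(i-j)`; for `ε ≠ 0` the result is a polynomial in `ε` whose value at `0` is the diagonal of `Mᵀ`.
-/

open Filter Topology Matrix

namespace Matrix

variable {𝕜 : Type*} [NontriviallyNormedField 𝕜] {n : ℕ}

theorem diagonal_pow_mul_mul_diagonal_inv_pow_of_isLowerTriangular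
    {A : Matrix (Fin n) (Fin n) 𝕜} (hA : A.IsLowerTriangular) {ε : 𝕜} (hε : ε ≠ 0) :
    diagonal (fun i : Fin n => ε ^ (i : ℕ)) * A * diagonal (fun i : Fin n => ε⁻¹ ^ (i : ℕ)) =
      of fun i j : Fin n => ε ^ ((i : ℕ) - j) * A i j := by
  ext i j
  rw [mul_diagonal, diagonal_mul, of_apply]
  rcases lt_or_ge i j with hij | hji
  · simp [hA (OrderDual.toDual_lt_toDual.mpr hij)]
  · rw [← Nat.sub_add_cancel (show (j : ℕ) ≤ i from hji), pow_add, Nat.add_sub_cancel, inv_pow]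
    field_simp

theorem of_zero_pow_sub_mul_eq_diagonal_diag {A : Matrix (Fin n) (Fin n) 𝕜}
    (hA : A.IsLowerTriangular) :
    (of fun i j : Fin n => (0 : 𝕜) ^ ((i : ℕ) - j) * A i j) = diagonal A.diag := by
  ext i j
  rcases lt_trichotomy i j with hij | rfl | hji
  · simp [hA (OrderDual.toDual_lt_toDual.mpr hij), hij.ne]
  · simp
  · simp [hji.ne', Nat.sub_ne_zero_of_lt (show (j : ℕ) < i from hji)]

theorem tendsto_diagonal_pow_mul_mul_diagonal_inv_pow {A : Matrix (Fin n) (Fin n) 𝕜}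
    (hA : A.IsLowerTriangular) :
    Tendsto (fun ε : 𝕜 =>
        diagonal (fun i : Fin n => ε ^ (i : ℕ)) * A * diagonal (fun i : Fin n => ε⁻¹ ^ (i : ℕ)))
      (𝓝[≠] 0) (𝓝 (diagonal A.diag)) := by
  have hcont : Continuous fun ε : 𝕜 => of fun i j : Fin n => ε ^ ((i : ℕ) - j) * A i j :=
    continuous_pi fun i => continuous_pi fun j => by fun_prop
  rw [← of_zero_pow_sub_mul_eq_diagonal_diag hA]
  refine (hcont.tendsto 0).mono_left nhdsWithin_le_nhds |>.congr' ?_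
  filter_upwards [self_mem_nhdsWithin] with ε hε
  exact (diagonal_pow_mul_mul_diagonal_inv_pow_of_isLowerTriangular hA hε).symm

end Matrix

section Recursion

variable {𝕜 : Type*} [NontriviallyNormedField 𝕜] {n : ℕ} [NeZero n] {U : Set 𝕜}
  {h : 𝕜 → 𝕜} {M : 𝕜 → Matrix (Fin n) (Fin n) 𝕜}

theorem apply_self_eq_apply_sub_one_mul_deriv (hU : IsOpen U)
    (hupper : ∀ z ∈ U, (M z).IsUpperTriangular)
    (hrec : ∀ j : Fin n, j ≠ 0 → ∀ z ∈ U,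
      M z j j = deriv (fun w => M w j (j - 1)) z + M z (j - 1) (j - 1) * deriv h z)
    {j : Fin n} (hj : j ≠ 0) {z : 𝕜} (hz : z ∈ U) :
    M z j j = M z (j - 1) (j - 1) * deriv h z := by
  have hlt : j - 1 < j := by
    rw [Fin.lt_def, Fin.val_sub_one_of_ne_zero hj]
    exact Nat.sub_one_lt (Fin.val_ne_zero_iff.mpr hj)
  have hderiv : deriv (fun w => M w j (j - 1)) z = 0 := by
    have hzero : (fun w => M w j (j - 1)) =ᶠ[𝓝 z] fun _ => 0 :=
      eventually_of_mem (hU.mem_nhds hz) fun w hw => hupper w hw hlt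
    rw [hzero.deriv_eq, deriv_const]
  rw [hrec j hj z hz, hderiv, zero_add]

theorem apply_self_eq_apply_zero_mul_deriv_pow (hU : IsOpen U)
    (hupper : ∀ z ∈ U, (M z).IsUpperTriangular)
    (hrec : ∀ j : Fin n, j ≠ 0 → ∀ z ∈ U,
      M z j j = deriv (fun w => M w j (j - 1)) z + M z (j - 1) (j - 1) * deriv h z)
    (j : Fin n) {z : 𝕜} (hz : z ∈ U) :
    M z j j = M z 0 0 * deriv h z ^ (j : ℕ) := by
  induction hk : (j : ℕ) generalizing j with
  | zero => rw [Fin.val_eq_zero_iff.mp hk, pow_zero, mul_one]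
  | succ k ih =>
    have hj : j ≠ 0 := by rintro rfl; simp at hk
    rw [apply_self_eq_apply_sub_one_mul_deriv hU hupper hrec hj hz,
      ih (j - 1) (by rw [Fin.val_sub_one_of_ne_zero hj, hk, Nat.add_sub_cancel]), pow_succ, mul_assoc]

end Recursion

theorem conjugated_wronskian_matrix_limit_general (n : ℕ) [NeZero n] (U : Set ℂ)
    (hU : IsOpen U) (g h : ℂ → ℂ)
    (M : ℂ → Matrix (Fin n) (Fin n) ℂ)
    (hM00 : ∀ z ∈ U, M z 0 0 = g z)
    (hMlow : ∀ i j : Fin n, (j : ℕ) < (i : ℕ) → ∀ z ∈ U, M z i j = 0)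
    (hMrec : ∀ i j : Fin n, 1 ≤ (j : ℕ) → (i : ℕ) ≤ (j : ℕ) → ∀ z ∈ U,
      M z i j = deriv (fun w => M w i (j - 1)) z
        + (if (i : ℕ) = 0 then 0 else M z (i - 1) (j - 1)) * deriv h z) :
    (∀ j : Fin n, ∀ z ∈ U, M z j j = g z * (deriv h z) ^ (j : ℕ)) ∧
    (∀ z ∈ U,
      Tendsto (fun ε : ℂ =>
          Matrix.diagonal (fun i : Fin n => ε ^ (i : ℕ)) * (M z)ᵀ *
            Matrix.diagonal (fun i : Fin n => ε⁻¹ ^ (i : ℕ)))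
        (𝓝[≠] 0)
        (𝓝 (Matrix.diagonal (fun i : Fin n => g z * (deriv h z) ^ (i : ℕ))))) := by
  have hupper : ∀ z ∈ U, (M z).IsUpperTriangular := fun z hz i j hji => hMlow i j hji z hz
  have hdiag : ∀ j : Fin n, ∀ z ∈ U, M z j j = g z * deriv h z ^ (j : ℕ) := by
    intro j z hz
    rw [← hM00 z hz]
    refine apply_self_eq_apply_zero_mul_deriv_pow hU hupper (fun j hj z hz => ?_) j hz
    have hj' : (j : ℕ) ≠ 0 := Fin.val_ne_zero_iff.mpr hj
    rw [hMrec j j (Nat.one_le_iff_ne_zero.mpr hj') le_rfl z hz, if_neg hj']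
  refine ⟨hdiag, fun z hz => ?_⟩
  have hlim := tendsto_diagonal_pow_mul_mul_diagonal_inv_pow (hupper z hz).transpose
  have hdiag_transpose : (M z)ᵀ.diag = fun i : Fin n => g z * deriv h z ^ (i : ℕ) :=
    funext fun i => hdiag i z hz
  rwa [hdiag_transpose] at hlim

/-- for the matrix `M` defined by the recursion
`M_{0,0} = g`, `M_{i,j} = 0` for `i > j`,
`M_{i,j} = (M_{i,j−1})′ + M_{i−1,j−1}·h′`, one has
(a) `M_{j,j} = g·(h′)^j`, and
(b) `D(ε)·Mᵀ·D(ε)⁻¹ → diag(g, g h′, …, g (h′)^{n−1})` as `ε → 0`,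
where `D(ε) = diag(1, ε, …, ε^{n−1})`. -/
theorem conjugated_wronskian_matrix_limit (n : ℕ) [NeZero n] (U : Set ℂ)
    (hU : IsOpen U) (g h : ℂ → ℂ)
    (hg : DifferentiableOn ℂ g U) (hh : DifferentiableOn ℂ h U)
    (M : ℂ → Matrix (Fin n) (Fin n) ℂ)
    (hM00 : ∀ z ∈ U, M z 0 0 = g z)
    (hMlow : ∀ i j : Fin n, (j : ℕ) < (i : ℕ) → ∀ z ∈ U, M z i j = 0)
    (hMrec : ∀ i j : Fin n, 1 ≤ (j : ℕ) → (i : ℕ) ≤ (j : ℕ) → ∀ z ∈ U,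
      M z i j = deriv (fun w => M w i (j - 1)) z
        + (if (i : ℕ) = 0 then 0 else M z (i - 1) (j - 1)) * deriv h z) :
    (∀ j : Fin n, ∀ z ∈ U, M z j j = g z * (deriv h z) ^ (j : ℕ)) ∧
    (∀ z ∈ U,
      Tendsto (fun ε : ℂ =>
          Matrix.diagonal (fun i : Fin n => ε ^ (i : ℕ)) * (M z)ᵀ *
            Matrix.diagonal (fun i : Fin n => ε⁻¹ ^ (i : ℕ)))
        (𝓝[≠] 0)
        (𝓝 (Matrix.diagonal (fun i : Fin n => g z * (deriv h z) ^ (i : ℕ))))) :=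
  conjugated_wronskian_matrix_limit_general n U hU g h M hM00 hMlow hMrec
end

section
/- Let n ≥ 1, let U, V ⊆ ℂ be open, and let γ : U → ℂ be holomorphic with γ(U) ⊆ V. Let m₀ : U → ℂ, w_U, u_U : U → ℂ, and w_V, u_V : V → ℂ be holomorphic functions satisfying w_U(z) = w_V(γ(z))·m₀(z) and u_U(z) = u_V(γ(z))·γ′(z) for all z ∈ U. Define M : U → Matrix (Fin n) (Fin n) ℂ by: M_{0,0} = m₀; M_{i,j} = 0 for i > j; and for j ≥ 1, 0 ≤ i ≤ j, M_{i,j} = (M_{i,j−1})′ + M_{i−1,j−1}·γ′ (with M_{−1,j−1} = 0). For X ∈ {U, V} define E_X : X → Matrix (Fin n) (Fin n) ℂ by: (E_X)_{0,0} = w_X; (E_X)_{i,j} = 0 for i > j; and for j ≥ 1, 0 ≤ i ≤ j, (E_X)_{i,j} = ((E_X)_{i,j−1})′ + (E_X)_{i−1,j−1}·u_X (with (E_X)_{−1,j−1} = 0). Then E_V(γ(z))·M(z) = E_U(z) for every z ∈ U. -/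
/-!
Both `z ↦ E_V(γ z) M(z)` and `E_U` satisfy the column recursion with coefficient
`u_U = (u_V ∘ γ) γ'`, and both have first column `(w_U, 0, …, 0)`; on an open set a matrix
function is determined by its first column and the recursion. That the product satisfies the
recursion is the Leibniz and chain rules: the `γ'`-term of the recursion of `M`, shifted by one
row, is matched against `(E_V ∘ γ)' = (E_V' ∘ γ) γ'` through the recursion of `E_V`; the
boundary term of that shift vanishes because `M` is upper triangular.
-/

open Matrix

namespace Fin

variable {n : ℕ} [NeZero n]

theorem val_sub_one_of_one_le {j : Fin n} (hj : 1 ≤ (j : ℕ)) : ((j - 1 : Fin n) : ℕ) = j - 1 :=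
  val_sub_one_of_ne_zero fun h => by simp [h] at hj

theorem val_neg_one_eq_sub_one : ((-1 : Fin n) : ℕ) = n - 1 := by
  obtain ⟨m, rfl⟩ := Nat.exists_eq_succ_of_ne_zero (NeZero.ne n)
  simp [coe_neg_one]

theorem induction_sub_one {P : Fin n → Prop} (zero : P 0)
    (step : ∀ j : Fin n, 1 ≤ (j : ℕ) → P (j - 1) → P j) (j : Fin n) : P j := by
  induction j using WellFoundedLT.induction with
  | _ j ih =>
    rcases Nat.eq_zero_or_pos j with h | h
    · rwa [val_eq_zero_iff.mp h]
    · exact step j h (ih _ (by rw [lt_def, val_sub_one_of_one_le h]; omega))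

theorem sum_ite_val_eq_zero_sub_one {R : Type*} [AddCommMonoid R] (g : Fin n → R)
    (hg : g (-1) = 0) : ∑ k : Fin n, (if (k : ℕ) = 0 then 0 else g (k - 1)) = ∑ k, g k := by
  calc _ = ∑ k, g (k - 1) := Finset.sum_congr rfl fun k _ => by
        split_ifs with hk
        · rw [val_eq_zero_iff.mp hk, zero_sub, hg]
        · rfl
    _ = ∑ k, g k := (Equiv.subRight 1).sum_comp g

end Fin

theorem Matrix.mul_apply_zero_of_blockTriangular {n : ℕ} [NeZero n] {R : Type*} [Semiring R]
    {A B : Matrix (Fin n) (Fin n) R} (hB : B.BlockTriangular id) (i : Fin n) :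
    (A * B) i 0 = A i 0 * B 0 0 := by
  rw [mul_apply, Finset.sum_eq_single 0 (fun k _ hk => by
    rw [hB (Fin.pos_iff_ne_zero.mpr hk), mul_zero]) (by simp)]

theorem hasDerivAt_comp_mul_apply {𝕜 : Type*} [NontriviallyNormedField 𝕜] {ι κ μ : Type*}
    [Fintype κ] {A : 𝕜 → Matrix ι κ 𝕜} {B : 𝕜 → Matrix κ μ 𝕜} {γ : 𝕜 → 𝕜} {z : 𝕜}
    {i : ι} {j : μ} (hA : ∀ k, DifferentiableAt 𝕜 (fun v => A v i k) (γ z))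
    (hγ : DifferentiableAt 𝕜 γ z) (hB : ∀ k, DifferentiableAt 𝕜 (fun w => B w k j) z) :
    HasDerivAt (fun w => (A (γ w) * B w) i j)
      (∑ k, (deriv (fun v => A v i k) (γ z) * deriv γ z * B z k j
        + A (γ z) i k * deriv (fun w => B w k j) z)) z := by
  simp only [mul_apply]
  exact HasDerivAt.fun_sum fun k _ =>
    ((hA k).hasDerivAt.comp z hγ.hasDerivAt).mul (hB k).hasDerivAt

section ColumnRecursion

variable {n : ℕ} [NeZero n]

def IsColumnRecursiveOn (S : Set ℂ) (b : ℂ → ℂ) (F : ℂ → Matrix (Fin n) (Fin n) ℂ) : Prop :=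
  ∀ i j : Fin n, 1 ≤ (j : ℕ) → ∀ z ∈ S,
    F z i j = deriv (fun w => F w i (j - 1)) z
      + (if (i : ℕ) = 0 then 0 else F z (i - 1) (j - 1)) * b z

variable {S : Set ℂ} {b : ℂ → ℂ} {F G : ℂ → Matrix (Fin n) (Fin n) ℂ}

theorem isColumnRecursiveOn_of_blockTriangular (hS : IsOpen S)
    (hF : ∀ z ∈ S, (F z).BlockTriangular id)
    (hrec : ∀ i j : Fin n, 1 ≤ (j : ℕ) → (i : ℕ) ≤ (j : ℕ) → ∀ z ∈ S,
      F z i j = deriv (fun w => F w i (j - 1)) z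
        + (if (i : ℕ) = 0 then 0 else F z (i - 1) (j - 1)) * b z) :
    IsColumnRecursiveOn S b F := by
  intro i j hj z hz
  rcases le_or_gt (i : ℕ) j with hij | hji
  · exact hrec i j hj hij z hz
  have hj' := Fin.val_sub_one_of_one_le hj
  have hi' := Fin.val_sub_one_of_one_le (hj.trans hji.le)
  have hcol : Set.EqOn (fun w => F w i (j - 1)) (fun _ => 0) S := fun w hw =>
    hF w hw (show j - 1 < i from Fin.lt_def.mpr (by omega))
  rw [hF z hz hji, (hcol.deriv hS hz).trans (deriv_const z 0), if_neg (by omega),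
    hF z hz (show j - 1 < i - 1 from Fin.lt_def.mpr (by omega)), zero_mul, add_zero]

theorem IsColumnRecursiveOn.differentiableOn_apply (hF : IsColumnRecursiveOn S b F)
    (hS : IsOpen S) (hb : DifferentiableOn ℂ b S)
    (h00 : DifferentiableOn ℂ (fun z => F z 0 0) S) (hlow : ∀ z ∈ S, (F z).BlockTriangular id)
    (i j : Fin n) : DifferentiableOn ℂ (fun z => F z i j) S := by
  induction j using Fin.induction_sub_one generalizing i with
  | zero =>
    rcases eq_or_ne i 0 with rfl | hi
    · exact h00
    · exact (differentiableOn_const 0).congr fun z hz => hlow z hz (Fin.pos_iff_ne_zero.mpr hi)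
  | step j hj ih =>
    refine (((ih i).deriv hS).add (DifferentiableOn.mul ?_ hb)).congr (hF i j hj)
    split_ifs
    · exact differentiableOn_const 0
    · exact ih (i - 1)

theorem IsColumnRecursiveOn.eqOn (hF : IsColumnRecursiveOn S b F)
    (hG : IsColumnRecursiveOn S b G) (hS : IsOpen S)
    (h0 : ∀ i, ∀ z ∈ S, F z i 0 = G z i 0) : Set.EqOn F G S := by
  suffices h : ∀ i j, Set.EqOn (fun z => F z i j) (fun z => G z i j) S from
    fun z hz => Matrix.ext fun i j => h i j hz
  intro i j
  induction j using Fin.induction_sub_one generalizing i with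
  | zero => exact h0 i
  | step j hj ih =>
    intro z hz
    change F z i j = G z i j
    rw [hF i j hj z hz, hG i j hj z hz, (ih i).deriv hS hz]
    split_ifs
    · rfl
    · rw [show F z (i - 1) (j - 1) = G z (i - 1) (j - 1) from ih (i - 1) hz]

theorem IsColumnRecursiveOn.comp_mul {U V : Set ℂ} {γ uU uV : ℂ → ℂ}
    {E M : ℂ → Matrix (Fin n) (Fin n) ℂ} (hE : IsColumnRecursiveOn V uV E)
    (hM : IsColumnRecursiveOn U (deriv γ) M) (hU : IsOpen U) (hV : IsOpen V)
    (hγ : DifferentiableOn ℂ γ U) (hγUV : Set.MapsTo γ U V)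
    (hu : ∀ z ∈ U, uU z = uV (γ z) * deriv γ z)
    (hEd : ∀ i j, DifferentiableOn ℂ (fun z => E z i j) V)
    (hMd : ∀ i j, DifferentiableOn ℂ (fun z => M z i j) U)
    (hMlow : ∀ z ∈ U, (M z).BlockTriangular id) :
    IsColumnRecursiveOn U uU (fun z => E (γ z) * M z) := by
  intro i j hj z hz
  have hj' := Fin.val_sub_one_of_one_le hj
  have hderiv := (hasDerivAt_comp_mul_apply (i := i) (j := j - 1)
    (fun k => (hEd i k).differentiableAt (hV.mem_nhds (hγUV hz)))
    (hγ.differentiableAt (hU.mem_nhds hz))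
    (fun k => (hMd k (j - 1)).differentiableAt (hU.mem_nhds hz))).deriv
  set r : Fin n → ℂ := fun k => if (i : ℕ) = 0 then 0 else E (γ z) (i - 1) k
  have hrow : (if (i : ℕ) = 0 then 0 else (E (γ z) * M z) (i - 1) (j - 1))
      = ∑ k, r k * M z k (j - 1) := by
    simp only [r]; split_ifs <;> simp [mul_apply]
  have hshift : ∑ k, E (γ z) i k * (if (k : ℕ) = 0 then 0 else M z (k - 1) (j - 1))
      = ∑ k, (deriv (fun v => E v i k) (γ z) + r k * uV (γ z)) * M z k (j - 1) := by
    refine Eq.trans ?_ (Fin.sum_ite_val_eq_zero_sub_one _ ?_)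
    · refine Finset.sum_congr rfl fun k _ => ?_
      split_ifs with hk
      · rw [mul_zero]
      · rw [hE i k (by omega) (γ z) (hγUV hz)]
    · rw [hMlow z hz (show j - 1 < -1 from Fin.lt_def.mpr (by
        rw [Fin.val_neg_one_eq_sub_one]; omega)), mul_zero]
  calc (E (γ z) * M z) i j
      = ∑ k, E (γ z) i k * deriv (fun w => M w k (j - 1)) z
        + (∑ k, E (γ z) i k * (if (k : ℕ) = 0 then 0 else M z (k - 1) (j - 1))) * deriv γ z := by
        simp only [mul_apply, Finset.sum_mul, ← Finset.sum_add_distrib]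
        refine Finset.sum_congr rfl fun k _ => ?_
        rw [hM k j hj z hz]
        ring
    _ = _ := by
        rw [hshift, hderiv, hrow, hu z hz]
        simp only [Finset.sum_mul, ← Finset.sum_add_distrib]
        exact Finset.sum_congr rfl fun k _ => by ring

end ColumnRecursion

theorem equivariance_of_wronskian_correction_general (n : ℕ) [NeZero n]
    (U V : Set ℂ) (hU : IsOpen U) (hV : IsOpen V)
    (γ : ℂ → ℂ) (hγ : DifferentiableOn ℂ γ U) (hγUV : Set.MapsTo γ U V)
    (m₀ wU uU wV uV : ℂ → ℂ)
    (hm₀ : DifferentiableOn ℂ m₀ U) (hwV : DifferentiableOn ℂ wV V)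
    (huV : DifferentiableOn ℂ uV V)
    (hw : ∀ z ∈ U, wU z = wV (γ z) * m₀ z)
    (hu : ∀ z ∈ U, uU z = uV (γ z) * deriv γ z)
    (M EU EV : ℂ → Matrix (Fin n) (Fin n) ℂ)
    (hM00 : ∀ z ∈ U, M z 0 0 = m₀ z)
    (hMlow : ∀ i j : Fin n, (j : ℕ) < (i : ℕ) → ∀ z ∈ U, M z i j = 0)
    (hMrec : ∀ i j : Fin n, 1 ≤ (j : ℕ) → (i : ℕ) ≤ (j : ℕ) → ∀ z ∈ U,
      M z i j = deriv (fun w => M w i (j - 1)) z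
        + (if (i : ℕ) = 0 then 0 else M z (i - 1) (j - 1)) * deriv γ z)
    (hEU00 : ∀ z ∈ U, EU z 0 0 = wU z)
    (hEUlow : ∀ i j : Fin n, (j : ℕ) < (i : ℕ) → ∀ z ∈ U, EU z i j = 0)
    (hEUrec : ∀ i j : Fin n, 1 ≤ (j : ℕ) → (i : ℕ) ≤ (j : ℕ) → ∀ z ∈ U,
      EU z i j = deriv (fun w => EU w i (j - 1)) z
        + (if (i : ℕ) = 0 then 0 else EU z (i - 1) (j - 1)) * uU z)
    (hEV00 : ∀ z ∈ V, EV z 0 0 = wV z)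
    (hEVlow : ∀ i j : Fin n, (j : ℕ) < (i : ℕ) → ∀ z ∈ V, EV z i j = 0)
    (hEVrec : ∀ i j : Fin n, 1 ≤ (j : ℕ) → (i : ℕ) ≤ (j : ℕ) → ∀ z ∈ V,
      EV z i j = deriv (fun w => EV w i (j - 1)) z
        + (if (i : ℕ) = 0 then 0 else EV z (i - 1) (j - 1)) * uV z) :
    ∀ z ∈ U, EV (γ z) * M z = EU z := by
  have upper {X : Set ℂ} {F : ℂ → Matrix (Fin n) (Fin n) ℂ}
      (h : ∀ i j : Fin n, (j : ℕ) < (i : ℕ) → ∀ z ∈ X, F z i j = 0) :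
      ∀ z ∈ X, (F z).BlockTriangular id := fun z hz i j hij => h i j hij z hz
  have hM := isColumnRecursiveOn_of_blockTriangular hU (upper hMlow) hMrec
  have hEU := isColumnRecursiveOn_of_blockTriangular hU (upper hEUlow) hEUrec
  have hEV := isColumnRecursiveOn_of_blockTriangular hV (upper hEVlow) hEVrec
  have hP := hEV.comp_mul hM hU hV hγ hγUV hu
    (hEV.differentiableOn_apply hV huV (hwV.congr hEV00) (upper hEVlow))
    (hM.differentiableOn_apply hU (hγ.deriv hU) (hm₀.congr hM00) (upper hMlow)) (upper hMlow)
  refine hP.eqOn hEU hU fun i z hz => ?_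
  rw [mul_apply_zero_of_blockTriangular (upper hMlow z hz), hM00 z hz]
  rcases eq_or_ne i 0 with rfl | hi
  · rw [hEV00 _ (hγUV hz), hEU00 z hz, hw z hz]
  · have hpos : 0 < i := Fin.pos_iff_ne_zero.mpr hi
    rw [upper hEVlow _ (hγUV hz) hpos, upper hEUlow z hz hpos, zero_mul]

/-- equivariance identity `E_V(γ(z))·M(z) = E_U(z)` for the
triangular matrices defined by the recursions `M_{0,0} = m₀`,
`M_{i,j} = (M_{i,j−1})′ + M_{i−1,j−1}·γ′` and `(E_X)_{0,0} = w_X`,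
`(E_X)_{i,j} = ((E_X)_{i,j−1})′ + (E_X)_{i−1,j−1}·u_X`, assuming
`w_U = (w_V ∘ γ)·m₀` and `u_U = (u_V ∘ γ)·γ′`. -/
theorem equivariance_of_wronskian_correction (n : ℕ) [NeZero n]
    (U V : Set ℂ) (hU : IsOpen U) (hV : IsOpen V)
    (γ : ℂ → ℂ) (hγ : DifferentiableOn ℂ γ U) (hγUV : Set.MapsTo γ U V)
    (m₀ wU uU wV uV : ℂ → ℂ)
    (hm₀ : DifferentiableOn ℂ m₀ U) (hwU : DifferentiableOn ℂ wU U)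
    (huU : DifferentiableOn ℂ uU U) (hwV : DifferentiableOn ℂ wV V)
    (huV : DifferentiableOn ℂ uV V)
    (hw : ∀ z ∈ U, wU z = wV (γ z) * m₀ z)
    (hu : ∀ z ∈ U, uU z = uV (γ z) * deriv γ z)
    (M EU EV : ℂ → Matrix (Fin n) (Fin n) ℂ)
    (hM00 : ∀ z ∈ U, M z 0 0 = m₀ z)
    (hMlow : ∀ i j : Fin n, (j : ℕ) < (i : ℕ) → ∀ z ∈ U, M z i j = 0)
    (hMrec : ∀ i j : Fin n, 1 ≤ (j : ℕ) → (i : ℕ) ≤ (j : ℕ) → ∀ z ∈ U,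
      M z i j = deriv (fun w => M w i (j - 1)) z
        + (if (i : ℕ) = 0 then 0 else M z (i - 1) (j - 1)) * deriv γ z)
    (hEU00 : ∀ z ∈ U, EU z 0 0 = wU z)
    (hEUlow : ∀ i j : Fin n, (j : ℕ) < (i : ℕ) → ∀ z ∈ U, EU z i j = 0)
    (hEUrec : ∀ i j : Fin n, 1 ≤ (j : ℕ) → (i : ℕ) ≤ (j : ℕ) → ∀ z ∈ U,
      EU z i j = deriv (fun w => EU w i (j - 1)) z
        + (if (i : ℕ) = 0 then 0 else EU z (i - 1) (j - 1)) * uU z)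
    (hEV00 : ∀ z ∈ V, EV z 0 0 = wV z)
    (hEVlow : ∀ i j : Fin n, (j : ℕ) < (i : ℕ) → ∀ z ∈ V, EV z i j = 0)
    (hEVrec : ∀ i j : Fin n, 1 ≤ (j : ℕ) → (i : ℕ) ≤ (j : ℕ) → ∀ z ∈ V,
      EV z i j = deriv (fun w => EV w i (j - 1)) z
        + (if (i : ℕ) = 0 then 0 else EV z (i - 1) (j - 1)) * uV z) :
    ∀ z ∈ U, EV (γ z) * M z = EU z :=
  equivariance_of_wronskian_correction_general n U V hU hV γ hγ hγUV m₀ wU uU wV uV hm₀ hwV huV hw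
    hu M EU EV hM00 hMlow hMrec hEU00 hEUlow hEUrec hEV00 hEVlow hEVrec
end
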